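/- Let (Z_n, ρ_n), n ≥ 1, be an equicontinuous sequence of compact semi-metric spaces and let (Z, ρ_0) be a compact semi-metric space. If there exist δ_n-isometries g_n : (Z,ρ_0) → (Z_n,ρ_n) with δ_n → 0+, then for every ε > 0 there exists N such that for all n ≥ N there exists an ε-isometry f_n : (Z_n,ρ_n) → (Z,ρ_0); in particular (Z_n,ρ_n) AI-converges to (Z,ρ_0). -/

import Mathlib

open Filter Topology Metric
open scoped ENNReal

universe u v

/-- A semi-metric (separating function) on a compact metrizable space: continuous, symmetric,
nonnegative, and vanishing exactly on the diagonal. -/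
def IsSemiMetric {Z : Type*} [TopologicalSpace Z] (ρ : Z → Z → ℝ) : Prop :=
  Continuous (Function.uncurry ρ) ∧ (∀ ξ η, ρ ξ η = ρ η ξ) ∧
    (∀ ξ η, 0 ≤ ρ ξ η) ∧ ∀ ξ η, ρ ξ η = 0 ↔ ξ = η

/-- An antipodal function: a semi-metric of diameter at most one such that every point has an
antipode at distance one. -/
def IsAntipodalFn {Z : Type*} [TopologicalSpace Z] (ρ : Z → Z → ℝ) : Prop :=
  IsSemiMetric ρ ∧ (∀ ξ η, ρ ξ η ≤ 1) ∧ ∀ ξ, ∃ η, ρ ξ η = 1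

/-- An `ε`-isometry between semi-metric spaces: distortion less than `ε`, and the image is an
`ε`-net. -/
def IsEpsIsometry {Z₁ : Type*} {Z₂ : Type*} (ρ₁ : Z₁ → Z₁ → ℝ) (ρ₂ : Z₂ → Z₂ → ℝ)
    (ε : ℝ) (f : Z₁ → Z₂) : Prop :=
  (∀ ξ η : Z₁, |ρ₂ (f ξ) (f η) - ρ₁ ξ η| < ε) ∧ ∀ ζ : Z₂, ∃ ξ : Z₁, ρ₂ (f ξ) ζ < ε

/-- AI-convergence of a sequence of semi-metric spaces `(Z n, ρ n)` to `(W, ρ₀)`: there are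
`ε n`-isometries `(Z n, ρ n) → (W, ρ₀)` with `ε n → 0+`. -/
def AIConverges {Z : ℕ → Type u} (ρ : ∀ n, Z n → Z n → ℝ) {W : Type v} (ρ₀ : W → W → ℝ) : Prop :=
  ∃ ε : ℕ → ℝ, (∀ n, 0 < ε n) ∧ Tendsto ε atTop (𝓝 0) ∧
    ∀ n, ∃ f : Z n → W, IsEpsIsometry (ρ n) ρ₀ (ε n) f

/-- An equicontinuous family of semi-metric spaces. -/
def EquicontinuousFamily {ι : Type*} {Z : ι → Type*} (ρ : ∀ i, Z i → Z i → ℝ) : Prop :=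
  ∀ ε : ℝ, 0 < ε → ∃ δ : ℝ, 0 < δ ∧ ∀ (i : ι) (ξ η : Z i), ρ i ξ η < δ →
    ∀ ζ : Z i, |ρ i ξ ζ - ρ i η ζ| < ε

/-! A quasi-inverse `f` of `g` (choose `f z` with `g (f z)` close to `z`) has small distortion
because `g` does and because, by equicontinuity, moving `z` to the nearby point `g (f z)` changes
all distances from it only a little. For the finitely many `n` where `δ n` is still large, the
same construction with the trivial modulus `2 sup |ρ n|` still gives some finite distortion, and
an infimum over the admissible distortions produces the sequence witnessing AI-convergence. -/

section EpsIsometry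

variable {Z₁ Z₂ : Type*} {ρ₁ : Z₁ → Z₁ → ℝ} {ρ₂ : Z₂ → Z₂ → ℝ}

lemma IsEpsIsometry.mono {a b : ℝ} {f : Z₁ → Z₂} (h : IsEpsIsometry ρ₁ ρ₂ a f) (hab : a ≤ b) :
    IsEpsIsometry ρ₁ ρ₂ b f :=
  ⟨fun ξ η => (h.1 ξ η).trans_le hab, fun ζ => (h.2 ζ).imp fun _ hξ => hξ.trans_le hab⟩

lemma IsEpsIsometry.exists_isEpsIsometry_reverse {a c : ℝ} {g : Z₁ → Z₂}
    (hg : IsEpsIsometry ρ₁ ρ₂ a g) (hsymm : ∀ ξ η, ρ₂ ξ η = ρ₂ η ξ) (hac : a ≤ 2 * c)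
    (hmod : ∀ ξ η, ρ₂ ξ η < a → ∀ ζ, |ρ₂ ξ ζ - ρ₂ η ζ| < c) :
    ∃ f : Z₂ → Z₁, IsEpsIsometry ρ₂ ρ₁ (a + 2 * c) f := by
  choose f hf using hg.2
  refine ⟨f, fun z z' => ?_, fun w => ⟨g w, ?_⟩⟩
  · have h₁ : |ρ₁ (f z) (f z') - ρ₂ (g (f z)) (g (f z'))| < a := by
      rw [abs_sub_comm]; exact hg.1 _ _
    have h₂ : |ρ₂ (g (f z)) (g (f z')) - ρ₂ z (g (f z'))| < c := hmod _ _ (hf z) _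
    have h₃ : |ρ₂ z (g (f z')) - ρ₂ z z'| < c := by
      rw [hsymm z, hsymm z z']; exact hmod _ _ (hf z') z
    have t₁ := abs_sub_le (ρ₁ (f z) (f z')) (ρ₂ (g (f z)) (g (f z'))) (ρ₂ z z')
    have t₂ := abs_sub_le (ρ₂ (g (f z)) (g (f z'))) (ρ₂ z (g (f z'))) (ρ₂ z z')
    linarith
  · have h₁ := (abs_lt.1 (hg.1 (f (g w)) w)).1
    have h₂ := hf (g w)
    linarith

lemma IsEpsIsometry.exists_isEpsIsometry_reverse_of_bounded {a C : ℝ} {g : Z₁ → Z₂}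
    (hg : IsEpsIsometry ρ₁ ρ₂ a g) (ha : 0 < a) (hsymm : ∀ ξ η, ρ₂ ξ η = ρ₂ η ξ)
    (hC : ∀ ξ η, |ρ₂ ξ η| ≤ C) :
    ∃ ε, ∃ f : Z₂ → Z₁, IsEpsIsometry ρ₂ ρ₁ ε f := by
  refine ⟨_, hg.exists_isEpsIsometry_reverse hsymm (c := 2 * |C| + a)
    (by linarith [abs_nonneg C]) fun ξ η _ ζ => ?_⟩
  calc |ρ₂ ξ ζ - ρ₂ η ζ| ≤ |ρ₂ ξ ζ| + |ρ₂ η ζ| := abs_sub _ _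
    _ < 2 * |C| + a := by linarith [hC ξ ζ, hC η ζ, le_abs_self C]

end EpsIsometry

lemma exists_forall_abs_le_of_continuous {Z : Type*} [TopologicalSpace Z] [CompactSpace Z]
    {ρ : Z → Z → ℝ} (hρ : Continuous (Function.uncurry ρ)) : ∃ C, ∀ ξ η, |ρ ξ η| ≤ C :=
  (isCompact_univ.exists_bound_of_continuousOn hρ.continuousOn).imp
    fun _ hC ξ η => hC (ξ, η) (Set.mem_univ _)

section Sequence

variable {Z : ℕ → Type u} {ρ : ∀ n, Z n → Z n → ℝ} {W : Type v} {ρ₀ : W → W → ℝ}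

lemma eventually_exists_isEpsIsometry_of_equicontinuous (hsymm : ∀ n ξ η, ρ n ξ η = ρ n η ξ)
    (hEq : EquicontinuousFamily ρ) {δ : ℕ → ℝ} (hδ0 : Tendsto δ atTop (𝓝 0))
    (hg : ∀ n, ∃ g : W → Z n, IsEpsIsometry ρ₀ (ρ n) (δ n) g) {ε : ℝ} (hε : 0 < ε) :
    ∀ᶠ n in atTop, ∃ f : Z n → W, IsEpsIsometry (ρ n) ρ₀ ε f := by
  obtain ⟨δ', hδ', hmod⟩ := hEq (ε / 4) (by positivity)
  filter_upwards [hδ0.eventually (gt_mem_nhds (lt_min hδ' (by positivity : 0 < ε / 4)))]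
    with n hn
  obtain ⟨hnδ', hnε⟩ := lt_min_iff.1 hn
  obtain ⟨g, hg⟩ := hg n
  obtain ⟨f, hf⟩ := hg.exists_isEpsIsometry_reverse (hsymm n) (by linarith)
    fun ξ η h => hmod n ξ η (h.trans hnδ')
  exact ⟨f, hf.mono (by linarith)⟩

/-- The witnessing sequence is `inf {c > 0 | there is a c-isometry} + 1 / (n + 1)`. -/
lemma aiConverges_of_eventually_exists_isEpsIsometry
    (hex : ∀ n, ∃ ε, ∃ f : Z n → W, IsEpsIsometry (ρ n) ρ₀ ε f)
    (hev : ∀ ε, 0 < ε → ∀ᶠ n in atTop, ∃ f : Z n → W, IsEpsIsometry (ρ n) ρ₀ ε f) :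
    AIConverges ρ ρ₀ := by
  set E : ℕ → Set ℝ := fun n => {c | 0 < c ∧ ∃ f : Z n → W, IsEpsIsometry (ρ n) ρ₀ c f}
  have hne : ∀ n, (E n).Nonempty := fun n => by
    obtain ⟨ε, f, hf⟩ := hex n
    exact ⟨max ε 1, by positivity, f, hf.mono (le_max_left _ _)⟩
  have hbdd : ∀ n, BddBelow (E n) := fun _ => ⟨0, fun _ hc => hc.1.le⟩
  have hinf₀ : ∀ n, 0 ≤ sInf (E n) := fun n => le_csInf (hne n) fun _ hc => hc.1.le
  have hinf : Tendsto (fun n => sInf (E n)) atTop (𝓝 0) := by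
    refine tendsto_order.2 ⟨fun a ha => .of_forall fun n => ha.trans_le (hinf₀ n),
      fun ε hε => ?_⟩
    filter_upwards [hev (ε / 2) (by positivity)] with n ⟨f, hf⟩
    exact (csInf_le (hbdd n) ⟨by positivity, f, hf⟩).trans_lt (by linarith)
  refine ⟨fun n => sInf (E n) + 1 / (n + 1), fun n => by positivity [hinf₀ n], ?_, fun n => ?_⟩
  · simpa using hinf.add tendsto_one_div_add_atTop_nhds_zero_nat
  · obtain ⟨c, ⟨-, f, hf⟩, hc⟩ :=
      Real.lt_sInf_add_pos (hne n) (by positivity : (0 : ℝ) < 1 / (n + 1))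
    exact ⟨f, hf.mono hc.le⟩

end Sequence

theorem AI_converges_of_inverse_isometries_of_equicontinuous
    {Z : ℕ → Type u} [∀ n, TopologicalSpace (Z n)] [∀ n, CompactSpace (Z n)]
    (ρ : ∀ n, Z n → Z n → ℝ) (hρ : ∀ n, IsSemiMetric (ρ n))
    (hEq : EquicontinuousFamily ρ)
    {W : Type v}
    (ρ₀ : W → W → ℝ)
    (δ : ℕ → ℝ) (hδ : ∀ n, 0 < δ n) (hδ0 : Tendsto δ atTop (𝓝 0))
    (hg : ∀ n, ∃ g : W → Z n, IsEpsIsometry ρ₀ (ρ n) (δ n) g) :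
    (∀ ε : ℝ, 0 < ε → ∃ N : ℕ, ∀ n, N ≤ n →
      ∃ f : Z n → W, IsEpsIsometry (ρ n) ρ₀ ε f) ∧
    AIConverges ρ ρ₀ := by
  have hsymm : ∀ n ξ η, ρ n ξ η = ρ n η ξ := fun n => (hρ n).2.1
  have hev := fun ε (hε : 0 < ε) =>
    eventually_exists_isEpsIsometry_of_equicontinuous hsymm hEq hδ0 hg hε
  refine ⟨fun ε hε => eventually_atTop.1 (hev ε hε),
    aiConverges_of_eventually_exists_isEpsIsometry (fun n => ?_) hev⟩
  obtain ⟨g, hg⟩ := hg n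
  obtain ⟨C, hC⟩ := exists_forall_abs_le_of_continuous (hρ n).1
  exact hg.exists_isEpsIsometry_reverse_of_bounded (hδ n) (hsymm n) hC
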